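/- arXiv:1004.3751 — 5 statements merged into one kernel-verified Lean document; each statement's English description precedes it below -/
import Mathlib

section
/- Let n ≥ 2 and let S_n be the n×n shift matrix. For every integer k with 1 ≤ k ≤ ⌊(n+1)/2⌋, the rank-k numerical range Λ_k(S_n) equals the closed disc {z ∈ ℂ : |z| ≤ cos(kπ/(n+1))}. -/
/-!
Conjugating by the unitary `diag(w̄ʲ)`, `‖w‖ = 1`, turns `S_n` into `w • S_n`, so `Λ_k(S_n)` is
invariant under rotations and it suffices to decide which `r = ‖z‖ ≥ 0` lie in it.

Upper bound: `P S_n P = z P` gives `P ((S_n + S_nᵀ)/2) P = (Re z) P`. The real symmetric matrix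
`(S_n + S_nᵀ)/2` has the eigenvalues `cos (jπ/(n+1))`, `j = 1, …, n`, with eigenvectors
`(sin (ijπ/(n+1)))ᵢ`; a nonzero vector in the range of `P` orthogonal to the first `k - 1` of them
shows `Re z ≤ cos (kπ/(n+1))`.

Lower bound: for `0 < r ≤ cos (kπ/(n+1))` and `j = 1, …, k` put `β = jπ/(n+1)` and choose `ρ > 0`,
`a + b = 1`, `a ≤ b` with `a = bρ²`, `rρ = 2a cos β`; then `a = b` only if `r = cos β`. Since
`ρ e^{iβ}` is a root of `bX² - rX + a`, the damped sine `x_j = (ρⁱ sin iβ)ᵢ` satisfies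
`(a S_n + b S_nᵀ) x_j = r x_j`. Two such equations with `b + b' ≠ 1` force
`⟨x_l, S_n x_j⟩ = r ⟨x_l, x_j⟩`, and the `x_j` are independent (a Vandermonde argument in the
`2k ≤ n` points `ρ e^{±iβ}`), so `S_n` compresses to `r` on their span.
For `r = 0` take the coordinate vectors `e_1, e_3, …, e_{2k-1}`.
-/

open Matrix

noncomputable section

/-- The `n × n` nilpotent shift matrix: `(S_n)_{ij} = 1` if `i = j + 1`, else `0`. -/
def shiftMatrix (n : ℕ) : Matrix (Fin n) (Fin n) ℂ :=
  Matrix.of fun i j => if (i : ℕ) = (j : ℕ) + 1 then 1 else 0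

/-- The rank-`k` numerical range of a square complex matrix `T`:
all `λ` such that `P * T * P = λ • P` for some orthogonal projection `P` of rank `k`. -/
def rankNumRange {m : Type*} [Fintype m] (k : ℕ) (T : Matrix m m ℂ) : Set ℂ :=
  {lam : ℂ | ∃ P : Matrix m m ℂ,
    P * P = P ∧ Pᴴ = P ∧ P.rank = k ∧ P * T * P = lam • P}

open Real
open scoped ComplexOrder

theorem shiftMatrix_conjTranspose (n : ℕ) : (shiftMatrix n)ᴴ = (shiftMatrix n)ᵀ := by
  ext i j
  simp only [conjTranspose_apply, transpose_apply, shiftMatrix, of_apply]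
  split_ifs <;> simp

theorem shiftMatrix_mulVec {n : ℕ} (w : ℕ → ℂ) (hw : w 0 = 0) :
    shiftMatrix n *ᵥ (fun i : Fin n => w (i + 1)) = fun i : Fin n => w i := by
  ext ⟨i, hi⟩
  simp only [mulVec, dotProduct, shiftMatrix, of_apply, ite_mul, one_mul, zero_mul]
  rcases i with _ | i
  · simp [hw]
  · rw [Finset.sum_eq_single ⟨i, by omega⟩
      (fun j _ hj => if_neg fun h => hj (Fin.ext (Nat.succ_injective h).symm)) (by simp)]
    simp

theorem shiftMatrix_transpose_mulVec {n : ℕ} (w : ℕ → ℂ) (hw : w (n + 1) = 0) :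
    (shiftMatrix n)ᵀ *ᵥ (fun i : Fin n => w (i + 1)) = fun i : Fin n => w (i + 2) := by
  ext ⟨i, hi⟩
  simp only [mulVec, dotProduct, transpose_apply, shiftMatrix, of_apply, ite_mul, one_mul,
    zero_mul]
  by_cases h : i + 1 < n
  · rw [Finset.sum_eq_single ⟨i + 1, h⟩ (fun j _ hj => if_neg fun h => hj (Fin.ext h)) (by simp)]
    simp
  · obtain rfl : i + 1 = n := by omega
    refine (Finset.sum_eq_zero fun j _ => if_neg ?_).trans hw.symm
    omega

section RankNumRange

variable {m : Type*} [Fintype m] {k : ℕ} {T : Matrix m m ℂ} {z : ℂ}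

theorem mem_rankNumRange_of_conjTranspose_mul_mul_eq {ι : Type*} [Fintype ι]
    {X : Matrix m ι ℂ} (hX : Function.Injective X.mulVec) (hXTX : Xᴴ * T * X = z • (Xᴴ * X)) :
    z ∈ rankNumRange (Fintype.card ι) T := by
  classical
  set G := Xᴴ * X with hG
  have hGu : IsUnit G.det :=
    (isUnit_iff_isUnit_det G).mp (PosDef.conjTranspose_mul_self X hX).isUnit
  have hPX : X * G⁻¹ * Xᴴ * X = X := by
    rw [Matrix.mul_assoc, ← hG, Matrix.mul_assoc, nonsing_inv_mul G hGu, Matrix.mul_one]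
  refine ⟨X * G⁻¹ * Xᴴ, ?_, ?_, le_antisymm ?_ ?_, ?_⟩
  · rw [← Matrix.mul_assoc, ← Matrix.mul_assoc, hPX]
  · rw [conjTranspose_mul, conjTranspose_mul, conjTranspose_conjTranspose,
      conjTranspose_nonsing_inv, hG, conjTranspose_mul, conjTranspose_conjTranspose,
      Matrix.mul_assoc]
  · exact ((rank_mul_le_left _ _).trans (rank_mul_le_left _ _)).trans X.rank_le_card_width
  · calc Fintype.card ι = G.rank := (rank_of_isUnit G ((isUnit_iff_isUnit_det G).mpr hGu)).symm
      _ = (Xᴴ * (X * G⁻¹ * Xᴴ * X)).rank := by rw [hPX]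
      _ ≤ (X * G⁻¹ * Xᴴ).rank := (rank_mul_le_right _ _).trans (rank_mul_le_left _ _)
  · calc X * G⁻¹ * Xᴴ * T * (X * G⁻¹ * Xᴴ) = X * G⁻¹ * (Xᴴ * T * X) * G⁻¹ * Xᴴ := by
          simp only [Matrix.mul_assoc]
      _ = z • (X * G⁻¹ * Xᴴ) := by
          rw [hXTX, Matrix.mul_smul, Matrix.smul_mul, Matrix.smul_mul,
            Matrix.mul_assoc (X * G⁻¹), mul_nonsing_inv G hGu, Matrix.mul_one]

theorem mem_rankNumRange_of_submatrix_eq [DecidableEq m] {ι : Type*} [Fintype ι] [DecidableEq ι]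
    {e : ι → m} (he : Function.Injective e) (h : T.submatrix e e = z • 1) :
    z ∈ rankNumRange (Fintype.card ι) T := by
  set X := (1 : Matrix m m ℂ).submatrix id e
  have hXX : Xᴴ * X = 1 := by
    ext a b
    simp [X, mul_apply, one_apply, he.eq_iff]
  refine mem_rankNumRange_of_conjTranspose_mul_mul_eq (X := X) (fun v w hvw => ?_) ?_
  · ext i
    simpa [X, mulVec, dotProduct, one_apply, he.eq_iff] using congrFun hvw (e i)
  · rw [hXX, ← h]
    ext a b
    simp [X, mul_apply, one_apply]

theorem mul_mem_rankNumRange_smul (c : ℂ) (hz : z ∈ rankNumRange k T) :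
    c * z ∈ rankNumRange k (c • T) := by
  obtain ⟨P, hP2, hPH, hPr, hPTP⟩ := hz
  refine ⟨P, hP2, hPH, hPr, ?_⟩
  rw [Matrix.mul_smul, Matrix.smul_mul, hPTP, smul_smul]

theorem add_star_mem_rankNumRange_add_conjTranspose (hz : z ∈ rankNumRange k T) :
    z + star z ∈ rankNumRange k (T + Tᴴ) := by
  obtain ⟨P, hP2, hPH, hPr, hPTP⟩ := hz
  refine ⟨P, hP2, hPH, hPr, ?_⟩
  have hPTHP : P * Tᴴ * P = star z • P := by
    conv_lhs => rw [← hPH]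
    rw [← conjTranspose_mul, ← conjTranspose_mul, ← Matrix.mul_assoc, hPTP, conjTranspose_smul,
      hPH]
  rw [Matrix.mul_add, Matrix.add_mul, hPTP, hPTHP, add_smul]

theorem rankNumRange_unitary_conj_subset [DecidableEq m] {U : Matrix m m ℂ}
    (hU : U ∈ unitaryGroup m ℂ) : rankNumRange k (star U * T * U) ⊆ rankNumRange k T := by
  rintro z ⟨P, hP2, hPH, hPr, hPTP⟩
  have hUU : star U * U = 1 := mem_unitaryGroup_iff'.mp hU
  refine ⟨U * P * star U, ?_, ?_, ?_, ?_⟩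
  · calc U * P * star U * (U * P * star U) = U * (P * (star U * U) * P) * star U := by
          simp only [Matrix.mul_assoc]
      _ = U * P * star U := by rw [hUU, Matrix.mul_one, hP2, Matrix.mul_assoc]
  · rw [star_eq_conjTranspose, conjTranspose_mul, conjTranspose_mul, conjTranspose_conjTranspose,
      hPH, Matrix.mul_assoc]
  · rw [rank_mul_eq_left_of_isUnit_det _ _ (UnitaryGroup.det_isUnit ⟨_, Unitary.star_mem hU⟩),
      rank_mul_eq_right_of_isUnit_det _ _ (UnitaryGroup.det_isUnit ⟨U, hU⟩), hPr]
  · calc U * P * star U * T * (U * P * star U) = U * (P * (star U * T * U) * P) * star U := by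
          simp only [Matrix.mul_assoc]
      _ = z • (U * P * star U) := by rw [hPTP, Matrix.mul_smul, Matrix.smul_mul]

theorem rankNumRange_unitary_conj [DecidableEq m] {U : Matrix m m ℂ}
    (hU : U ∈ unitaryGroup m ℂ) : rankNumRange k (star U * T * U) = rankNumRange k T := by
  refine (rankNumRange_unitary_conj_subset hU).antisymm ?_
  have hUU : U * star U = 1 := mem_unitaryGroup_iff.mp hU
  have h := rankNumRange_unitary_conj_subset (k := k) (T := star U * T * U) (Unitary.star_mem hU)
  rwa [star_star, ← Matrix.mul_assoc, ← Matrix.mul_assoc, hUU, Matrix.one_mul, Matrix.mul_assoc,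
    hUU, Matrix.mul_one] at h

theorem exists_ne_zero_mulVec_eq_zero_of_mem_rankNumRange {ι : Type*} [Fintype ι]
    (hz : z ∈ rankNumRange k T) (M : Matrix ι m ℂ) (hι : Fintype.card ι < k) :
    ∃ x ≠ 0, M *ᵥ x = 0 ∧ star x ⬝ᵥ T *ᵥ x = z * (star x ⬝ᵥ x) := by
  obtain ⟨P, hP2, hPH, hPr, hPTP⟩ := hz
  have hker : LinearMap.ker (M.mulVecLin ∘ₗ (LinearMap.range P.mulVecLin).subtype) ≠ ⊥ :=
    LinearMap.ker_ne_bot_of_finrank_lt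
      (by rw [Module.finrank_fintype_fun_eq_card]; exact hι.trans_eq hPr.symm)
  obtain ⟨⟨x, u, rfl⟩, hMx, hx0⟩ := (Submodule.ne_bot_iff _).mp hker
  have hPx : P *ᵥ (P.mulVecLin u) = P.mulVecLin u := by
    rw [mulVecLin_apply, mulVec_mulVec, hP2]
  refine ⟨_, fun h => hx0 (Subtype.ext h), hMx, ?_⟩
  set x := P.mulVecLin u
  calc star x ⬝ᵥ T *ᵥ x = star (P *ᵥ x) ⬝ᵥ T *ᵥ (P *ᵥ x) := by rw [hPx]
    _ = star x ⬝ᵥ (P * T * P) *ᵥ x := by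
        rw [star_mulVec, hPH, ← dotProduct_mulVec, mulVec_mulVec, mulVec_mulVec]
    _ = z * (star x ⬝ᵥ x) := by rw [hPTP, smul_mulVec, dotProduct_smul, hPx, smul_eq_mul]

end RankNumRange

section Eigenbasis

variable {m : Type*} [Fintype m] [DecidableEq m]

theorem mul_eq_mul_diagonal_of_mulVec_eq_smul {A V : Matrix m m ℂ} {d : m → ℂ}
    (h : ∀ j, A *ᵥ (fun i => V i j) = d j • fun i => V i j) : A * V = V * diagonal d := by
  ext i j
  rw [mul_diagonal, mul_comm]
  exact congrFun (h j) i

theorem star_dotProduct_diagonal_mulVec (f : m → ℝ) (y : m → ℂ) :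
    star y ⬝ᵥ diagonal (fun i => (f i : ℂ)) *ᵥ y =
      ((∑ i, f i * Complex.normSq (y i) : ℝ) : ℂ) := by
  simp only [dotProduct, mulVec_diagonal, Pi.star_apply, Complex.ofReal_sum, Complex.ofReal_mul,
    Complex.normSq_eq_conj_mul_self, RCLike.star_def]
  exact Finset.sum_congr rfl fun i _ => by ring

theorem re_star_dotProduct_mulVec_le_of_eigenbasis {A V : Matrix m m ℂ} {d N : m → ℝ}
    (hN : ∀ i, 0 < N i) (hV : Vᴴ * V = diagonal (fun i => (N i : ℂ)))
    (hAV : A * V = V * diagonal (fun i => (d i : ℂ))) {c : ℝ} {x : m → ℂ}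
    (hx : ∀ i, c < d i → (Vᴴ *ᵥ x) i = 0) :
    (star x ⬝ᵥ A *ᵥ x).re ≤ c * (star x ⬝ᵥ x).re := by
  set W := diagonal (fun i => ((N i)⁻¹ : ℂ)) * Vᴴ
  have hWV : W * V = 1 := by
    rw [Matrix.mul_assoc, hV, diagonal_mul_diagonal, ← diagonal_one]
    exact congrArg diagonal (funext fun i => inv_mul_cancel₀ (by exact_mod_cast (hN i).ne'))
  set y := W *ᵥ x
  have hxy : x = V *ᵥ y := by rw [mulVec_mulVec, mul_eq_one_comm.mp hWV, one_mulVec]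
  have hy : ∀ i, c < d i → y i = 0 := fun i hi => by
    simp [y, W, ← mulVec_mulVec, mulVec_diagonal, hx i hi]
  have hquad : ∀ B : Matrix m m ℂ, star x ⬝ᵥ B *ᵥ x = star y ⬝ᵥ (Vᴴ * B * V) *ᵥ y := fun B => by
    rw [hxy, star_mulVec, ← dotProduct_mulVec, mulVec_mulVec, mulVec_mulVec, Matrix.mul_assoc]
  have hA : Vᴴ * A * V = diagonal (fun i => ((N i * d i : ℝ) : ℂ)) := by
    rw [Matrix.mul_assoc, hAV, ← Matrix.mul_assoc, hV, diagonal_mul_diagonal]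
    push_cast; rfl
  have h1 : Vᴴ * 1 * V = diagonal (fun i => (N i : ℂ)) := by rw [Matrix.mul_one, hV]
  have hxx : star x ⬝ᵥ x = star x ⬝ᵥ (1 : Matrix m m ℂ) *ᵥ x := by rw [one_mulVec]
  rw [hxx, hquad, hquad, hA, h1, star_dotProduct_diagonal_mulVec, star_dotProduct_diagonal_mulVec,
    Complex.ofReal_re, Complex.ofReal_re, Finset.mul_sum]
  refine Finset.sum_le_sum fun i _ => ?_
  rcases le_or_gt (d i) c with hdc | hcd
  · nlinarith [mul_nonneg (hN i).le (Complex.normSq_nonneg (y i))]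
  · simp [hy i hcd]

theorem re_le_of_mem_rankNumRange_of_eigenbasis {k : ℕ} {A V : Matrix m m ℂ} {d N : m → ℝ}
    (hN : ∀ i, 0 < N i) (hV : Vᴴ * V = diagonal (fun i => (N i : ℂ)))
    (hAV : A * V = V * diagonal (fun i => (d i : ℂ))) {c : ℝ}
    (hcard : Fintype.card {i // c < d i} < k) {z : ℂ} (hz : z ∈ rankNumRange k A) :
    z.re ≤ c := by
  obtain ⟨x, hx0, hMx, hxAx⟩ :=
    exists_ne_zero_mulVec_eq_zero_of_mem_rankNumRange hz (Vᴴ.submatrix Subtype.val id) hcard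
  have hbound := re_star_dotProduct_mulVec_le_of_eigenbasis hN hV hAV (x := x) (c := c)
    fun i hi => congrFun hMx ⟨i, hi⟩
  obtain ⟨hre, him⟩ := Complex.pos_iff.mp (dotProduct_star_self_pos_iff.mpr hx0)
  rw [hxAx, Complex.mul_re, ← him, mul_zero, sub_zero] at hbound
  exact le_of_mul_le_mul_right hbound hre

end Eigenbasis

section Transpose

variable {R ι : Type*} [Field R] [Fintype ι] {T : Matrix ι ι R} {x y : ι → R} {a b r : R}

theorem dotProduct_smul_add_smul_transpose_mulVec (a b : R) (x y : ι → R) :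
    y ⬝ᵥ (a • T + b • Tᵀ) *ᵥ x = a * (y ⬝ᵥ T *ᵥ x) + b * (x ⬝ᵥ T *ᵥ y) := by
  rw [add_mulVec, smul_mulVec, smul_mulVec, dotProduct_add, dotProduct_smul, dotProduct_smul,
    dotProduct_mulVec y Tᵀ, vecMul_transpose, dotProduct_comm (T *ᵥ y), smul_eq_mul, smul_eq_mul]

theorem dotProduct_mulVec_self_eq_of_mulVec_eq (hab : a + b = 1)
    (hx : (a • T + b • Tᵀ) *ᵥ x = r • x) : x ⬝ᵥ T *ᵥ x = r * (x ⬝ᵥ x) := by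
  have h := dotProduct_smul_add_smul_transpose_mulVec (T := T) a b x x
  rw [hx, dotProduct_smul, smul_eq_mul] at h
  linear_combination -h - (x ⬝ᵥ T *ᵥ x) * hab

/-- With `s = y ⬝ᵥ T *ᵥ x` and `t = x ⬝ᵥ T *ᵥ y`, the two eigen-equations read
`a s + b t = a' t + b' s = r (y ⬝ᵥ x)`, whence `(1 - b - b') (s - t) = 0`. -/
theorem dotProduct_mulVec_eq_of_mulVec_eq {a' b' : R} (hab : a + b = 1) (hab' : a' + b' = 1)
    (hbb : b + b' ≠ 1) (hx : (a • T + b • Tᵀ) *ᵥ x = r • x)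
    (hy : (a' • T + b' • Tᵀ) *ᵥ y = r • y) : y ⬝ᵥ T *ᵥ x = r * (y ⬝ᵥ x) := by
  have h := dotProduct_smul_add_smul_transpose_mulVec (T := T) a b x y
  have h' := dotProduct_smul_add_smul_transpose_mulVec (T := T) a' b' y x
  rw [hx, dotProduct_smul, smul_eq_mul] at h
  rw [hy, dotProduct_smul, smul_eq_mul, dotProduct_comm x y] at h'
  have hst : y ⬝ᵥ T *ᵥ x = x ⬝ᵥ T *ᵥ y := by
    refine sub_eq_zero.mp ((mul_eq_zero.mp ?_).resolve_left (sub_ne_zero.mpr hbb.symm))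
    linear_combination -h + h' - (y ⬝ᵥ T *ᵥ x) * hab + (x ⬝ᵥ T *ᵥ y) * hab'
  linear_combination -h - (y ⬝ᵥ T *ᵥ x) * hab + b * hst

theorem transpose_mul_mul_eq_smul_of_mulVec_eq {κ : Type*} [Fintype κ] {X : Matrix ι κ R}
    {a b : κ → R} (hab : ∀ j, a j + b j = 1) (hbb : Pairwise fun j j' => b j + b j' ≠ 1)
    (hX : ∀ j, (a j • T + b j • Tᵀ) *ᵥ (fun i => X i j) = r • fun i => X i j) :
    Xᵀ * T * X = r • (Xᵀ * X) := by
  ext j j'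
  rw [Matrix.mul_assoc, Matrix.smul_apply, mul_apply', mul_apply', smul_eq_mul]
  rcases eq_or_ne j j' with rfl | hne
  · exact dotProduct_mulVec_self_eq_of_mulVec_eq (hab j) (hX j)
  · exact dotProduct_mulVec_eq_of_mulVec_eq (hab j') (hab j) (hbb hne.symm) (hX j') (hX j)

theorem dotProduct_eq_zero_of_mulVec_eq_smul {A : Matrix ι ι R} (hA : Aᵀ = A) {μ ν : R}
    (hμν : μ ≠ ν) (hx : A *ᵥ x = μ • x) (hy : A *ᵥ y = ν • y) : y ⬝ᵥ x = 0 := by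
  have h : μ * (y ⬝ᵥ x) = ν * (y ⬝ᵥ x) := by
    rw [← smul_eq_mul, ← dotProduct_smul, ← hx, dotProduct_mulVec, ← mulVec_transpose, hA, hy,
      smul_dotProduct, smul_eq_mul]
  exact (mul_eq_zero.mp (by linear_combination h)).resolve_left (sub_ne_zero.mpr hμν)

end Transpose

def imPowVec (n : ℕ) (z : ℂ) : Fin n → ℂ := fun i => ((z ^ ((i : ℕ) + 1)).im : ℂ)

theorem shiftMatrix_mulVec_imPowVec {n : ℕ} {z : ℂ} {a b r : ℝ}
    (hz : b * z ^ 2 - r * z + a = 0) (hzn : (z ^ (n + 1)).im = 0) :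
    ((a : ℂ) • shiftMatrix n + (b : ℂ) • (shiftMatrix n)ᵀ) *ᵥ imPowVec n z =
      (r : ℂ) • imPowVec n z := by
  have hS := shiftMatrix_mulVec (n := n) (fun j => ((z ^ j).im : ℂ)) (by simp)
  have hST := shiftMatrix_transpose_mulVec (n := n) (fun j => ((z ^ j).im : ℂ)) (by simp [hzn])
  unfold imPowVec
  rw [add_mulVec, smul_mulVec, smul_mulVec, hS, hST]
  ext i
  -- `Im (zⁱ (b z² - r z + a)) = 0` is the recurrence `a wᵢ + b wᵢ₊₂ = r wᵢ₊₁` for `wᵢ = Im zⁱ`.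
  have hrec := congrArg Complex.im (congrArg (· * z ^ (i : ℕ)) hz)
  simp only [sub_mul, add_mul, zero_mul, Complex.sub_im, Complex.add_im, Complex.zero_im,
    mul_assoc, Complex.im_ofReal_mul, ← pow_succ', ← pow_add] at hrec
  simp only [Pi.add_apply, Pi.smul_apply, smul_eq_mul]
  rw [show (i : ℕ) + 2 = 2 + i by ring]
  exact_mod_cast by linear_combination hrec

theorem injective_mulVec_imPowVec {n k : ℕ} (hkn : 2 * k ≤ n) {z : Fin k → ℂ}
    (hz : Function.Injective z) (him : ∀ j, 0 < (z j).im) :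
    Function.Injective (of fun i j => imPowVec n (z j) i).mulVec := by
  set X := of fun i j => imPowVec n (z j) i
  suffices h : ∀ v, X *ᵥ v = 0 → v = 0 by
    intro v w hvw
    exact sub_eq_zero.mp (h _ (by rw [mulVec_sub, hvw, sub_self]))
  intro v hv
  -- `Im w = (w - w̄) / 2i` turns the first `2k` rows of `X v = 0` into a Vandermonde system in
  -- the `2k` distinct points `z j`, `z̄ j`.
  have hpow := Matrix.eq_zero_of_forall_pow_sum_mul_pow_eq_zero
    (f := Fin.append z (fun j => star (z j)))
    (v := Fin.append (fun j => v j * z j) (fun j => -(v j * star (z j)))) ?_ ?_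
  · funext j
    have hj := congrFun hpow (Fin.castAdd k j)
    simp only [Fin.append_left, Pi.zero_apply] at hj
    exact (mul_eq_zero.mp hj).resolve_right fun h => (him j).ne' (by simp [h])
  · refine Fin.append_injective_iff.mpr ⟨hz, star_injective.comp hz, fun i j h => ?_⟩
    have := congrArg Complex.im h
    simp only [Complex.star_def, Complex.conj_im] at this
    linarith [him i, him j]
  · intro p
    have hp := congrFun hv ⟨p, by omega⟩
    simp only [X, mulVec, dotProduct, of_apply, imPowVec, Complex.im_eq_sub_conj, Pi.zero_apply,
      div_mul_eq_mul_div, ← Finset.sum_div, div_eq_zero_iff] at hp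
    rw [Fin.sum_univ_add, ← Finset.sum_add_distrib, ← hp.resolve_right (by simp)]
    refine Finset.sum_congr rfl fun j _ => ?_
    simp only [Fin.append_left, Fin.append_right, map_pow, Complex.star_def]
    ring

theorem ofReal_mul_exp_mul_I_quadratic_eq_zero {ρ β a b r : ℝ} (ha : a = b * ρ ^ 2)
    (hr : r * ρ = 2 * a * cos β) :
    (b : ℂ) * (ρ * Complex.exp (β * Complex.I)) ^ 2 - r * (ρ * Complex.exp (β * Complex.I)) + a
      = 0 := by
  have ha' : (a : ℂ) = b * ρ ^ 2 := by exact_mod_cast ha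
  have hr' : (r : ℂ) * ρ = 2 * a * cos β := by exact_mod_cast hr
  have hcos : 2 * (cos β : ℂ) = Complex.exp (β * Complex.I) + Complex.exp (-β * Complex.I) := by
    rw [Complex.ofReal_cos, Complex.two_cos]
  have hexp : Complex.exp (β * Complex.I) * Complex.exp (-β * Complex.I) = 1 := by
    rw [← Complex.exp_add, neg_mul, add_neg_cancel, Complex.exp_zero]
  linear_combination (-Complex.exp (β * Complex.I)) * hr' - a * Complex.exp (β * Complex.I) * hcos
    - a * hexp - Complex.exp (β * Complex.I) ^ 2 * ha'

theorem im_ofReal_mul_exp_mul_I_pow (ρ β : ℝ) (j : ℕ) :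
    ((ρ * Complex.exp (β * Complex.I)) ^ j).im = ρ ^ j * sin (j * β) := by
  rw [mul_pow, ← Complex.exp_nat_mul, ← Complex.ofReal_pow,
    show (j : ℂ) * (β * Complex.I) = ((j * β : ℝ) : ℂ) * Complex.I by push_cast; ring,
    Complex.im_ofReal_mul, Complex.exp_ofReal_mul_I_im]

theorem natCast_mul_pi_div_mem_Ioo {n j : ℕ} (hj : 0 < j) (hjn : j < n + 1) :
    (j : ℝ) * π / (n + 1) ∈ Set.Ioo 0 π := by
  have hjn' : (j : ℝ) < n + 1 := by exact_mod_cast hjn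
  refine ⟨by positivity, ?_⟩
  rw [div_lt_iff₀ (by positivity)]
  nlinarith [Real.pi_pos]

theorem strictAntiOn_cos_natCast_mul_pi_div (n : ℕ) :
    StrictAntiOn (fun j : ℕ => cos (j * π / (n + 1))) (Set.Iic (n + 1)) := by
  intro i hi j hj hij
  have hi' : (i : ℝ) ≤ n + 1 := by exact_mod_cast hi
  have hj' : (j : ℝ) ≤ n + 1 := by exact_mod_cast hj
  have hn : (0 : ℝ) < n + 1 := by positivity
  refine strictAntiOn_cos ⟨by positivity, ?_⟩ ⟨by positivity, ?_⟩ (by gcongr)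
  · rw [div_le_iff₀ hn]; nlinarith [Real.pi_pos]
  · rw [div_le_iff₀ hn]; nlinarith [Real.pi_pos]

theorem shiftMatrix_mulVec_imPowVec_of_angle {n j : ℕ} {ρ a b r : ℝ} (ha : a = b * ρ ^ 2)
    (hr : r * ρ = 2 * a * cos (j * π / (n + 1))) :
    ((a : ℂ) • shiftMatrix n + (b : ℂ) • (shiftMatrix n)ᵀ) *ᵥ
        imPowVec n (ρ * Complex.exp ((j * π / (n + 1) : ℝ) * Complex.I)) =
      (r : ℂ) • imPowVec n (ρ * Complex.exp ((j * π / (n + 1) : ℝ) * Complex.I)) := by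
  refine shiftMatrix_mulVec_imPowVec (ofReal_mul_exp_mul_I_quadratic_eq_zero ha hr) ?_
  rw [im_ofReal_mul_exp_mul_I_pow, show ((n + 1 : ℕ) : ℝ) * (j * π / (n + 1)) = j * π by
    push_cast; field_simp, sin_nat_mul_pi, mul_zero]

theorem exists_damping_parameters {r c : ℝ} (hr : 0 < r) (hrc : r ≤ c) :
    ∃ ρ a b : ℝ, 0 < ρ ∧ a + b = 1 ∧ a = b * ρ ^ 2 ∧ r * ρ = 2 * a * c ∧ a ≤ b ∧
      (a = b → r = c) := by
  have hc : 0 < c := hr.trans_le hrc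
  set l := √(1 - (r / c) ^ 2)
  have hl0 : 0 ≤ l := Real.sqrt_nonneg _
  have hl2 : c ^ 2 * (1 - l ^ 2) = r ^ 2 := by
    rw [Real.sq_sqrt (by rw [sub_nonneg, sq_le_one_iff₀ (by positivity)]; exact (div_le_one hc).mpr hrc)]
    field_simp; ring
  refine ⟨r / (c * (1 + l)), (1 - l) / 2, (1 + l) / 2, by positivity, by ring, ?_, ?_, by linarith,
    fun h => ?_⟩
  · field_simp; linear_combination hl2
  · field_simp; linear_combination -hl2
  · have hl : l = 0 := by linarith
    rw [hl] at hl2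
    nlinarith

theorem exists_orthogonal_eigenbasis_shiftMatrix (n : ℕ) :
    ∃ (V : Matrix (Fin n) (Fin n) ℂ) (N : Fin n → ℝ), (∀ j, 0 < N j) ∧
      Vᴴ * V = diagonal (fun j => (N j : ℂ)) ∧
      (((1 / 2 : ℝ) : ℂ) • shiftMatrix n + ((1 / 2 : ℝ) : ℂ) • (shiftMatrix n)ᵀ) * V =
        V * diagonal (fun j : Fin n => (cos (((j + 1 : ℕ) : ℝ) * π / (n + 1)) : ℂ)) := by
  set β : Fin n → ℝ := fun j => ((j + 1 : ℕ) : ℝ) * π / (n + 1)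
  set w : Fin n → ℂ := fun j => ((1 : ℝ) : ℂ) * Complex.exp (β j * Complex.I)
  set A := ((1 / 2 : ℝ) : ℂ) • shiftMatrix n + ((1 / 2 : ℝ) : ℂ) • (shiftMatrix n)ᵀ
  set V := of fun i j => imPowVec n (w j) i
  have hcol : ∀ j, A *ᵥ (fun i => V i j) = (cos (β j) : ℂ) • fun i => V i j := fun j =>
    shiftMatrix_mulVec_imPowVec_of_angle (by norm_num) (by ring)
  have hA : Aᵀ = A := by
    rw [transpose_add, transpose_smul, transpose_smul, transpose_transpose, add_comm]
  have hVH : Vᴴ = Vᵀ := by ext i j; simp [V, imPowVec]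
  refine ⟨V, fun j => ∑ i : Fin n, ((w j) ^ ((i : ℕ) + 1)).im ^ 2, fun j => ?_, ?_,
    mul_eq_mul_diagonal_of_mulVec_eq_smul hcol⟩
  · refine Finset.sum_pos' (fun i _ => sq_nonneg _) ⟨⟨0, Fin.pos j⟩, Finset.mem_univ _, ?_⟩
    obtain ⟨hβ0, hβπ⟩ := natCast_mul_pi_div_mem_Ioo (n := n) (Nat.succ_pos j) (by omega)
    simp only [w, im_ofReal_mul_exp_mul_I_pow, zero_add, one_pow, Nat.cast_one, one_mul]
    exact pow_pos (sin_pos_of_pos_of_lt_pi hβ0 hβπ) 2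
  · ext j j'
    rw [hVH, mul_apply']
    rcases eq_or_ne j j' with rfl | hne
    · simp [dotProduct, V, imPowVec, sq]
    · rw [diagonal_apply_ne _ hne]
      refine dotProduct_eq_zero_of_mulVec_eq_smul hA ?_ (hcol j') (hcol j)
      refine Complex.ofReal_injective.ne ((strictAntiOn_cos_natCast_mul_pi_div n).injOn.ne ?_ ?_
        (by simpa [Fin.ext_iff] using hne.symm)) <;> simp only [Set.mem_Iic] <;> omega

theorem re_le_of_mem_rankNumRange_shiftMatrix {n k : ℕ} (hk : 1 ≤ k) {z : ℂ}
    (hz : z ∈ rankNumRange k (shiftMatrix n)) : z.re ≤ cos (k * π / (n + 1)) := by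
  obtain ⟨V, N, hN, hV, hAV⟩ := exists_orthogonal_eigenbasis_shiftMatrix n
  have hcard : Fintype.card {j : Fin n // cos (k * π / (n + 1)) <
      cos (((j + 1 : ℕ) : ℝ) * π / (n + 1))} < k := by
    refine (Fintype.card_le_of_injective (β := Fin (k - 1))
      (fun j => ⟨j.1, ?_⟩) fun a b h => ?_).trans_lt (by rw [Fintype.card_fin]; omega)
    · by_contra hle
      have hkj : k ≤ (j.1 : ℕ) + 1 := by omega
      have hj : (j.1 : ℕ) + 1 ≤ n + 1 := by omega
      exact not_lt.mpr (((strictAntiOn_cos_natCast_mul_pi_div n).le_iff_ge hj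
        (hkj.trans hj)).mpr hkj) j.2
    · exact Subtype.ext (Fin.ext (by simpa using h))
  have h := mul_mem_rankNumRange_smul ((1 / 2 : ℝ) : ℂ)
    (add_star_mem_rankNumRange_add_conjTranspose hz)
  rw [shiftMatrix_conjTranspose, smul_add] at h
  have hre := re_le_of_mem_rankNumRange_of_eigenbasis hN hV hAV hcard h
  rw [Complex.re_ofReal_mul, Complex.add_re, Complex.star_def, Complex.conj_re] at hre
  linarith

theorem zero_mem_rankNumRange_shiftMatrix {n k : ℕ} (hk : 2 * k ≤ n + 1) :
    (0 : ℂ) ∈ rankNumRange k (shiftMatrix n) := by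
  have h := mem_rankNumRange_of_submatrix_eq (T := shiftMatrix n) (z := 0)
    (e := fun j : Fin k => (⟨2 * j, by omega⟩ : Fin n))
    (fun a b h => by simpa [Fin.ext_iff] using h) ?_
  · simpa using h
  · ext a b
    simp only [shiftMatrix, submatrix_apply, of_apply, Matrix.smul_apply, zero_smul]
    exact if_neg (by omega)

theorem ofReal_mem_rankNumRange_shiftMatrix_of_pos {n k : ℕ} (hk : 2 * k ≤ n + 1) {r : ℝ}
    (hr : 0 < r) (hrk : r ≤ cos (k * π / (n + 1))) :
    (r : ℂ) ∈ rankNumRange k (shiftMatrix n) := by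
  have hanti := strictAntiOn_cos_natCast_mul_pi_div n
  have hkn : 2 * k ≤ n := by
    by_contra h
    have h2k : (2 * k : ℝ) = n + 1 := by exact_mod_cast (by omega : 2 * k = n + 1)
    rw [show (k : ℝ) * π / (n + 1) = π / 2 by field_simp; linarith, cos_pi_div_two] at hrk
    linarith
  have hmem : ∀ j : Fin k, (j : ℕ) + 1 ∈ Set.Iic (n + 1) := fun j => by
    simp only [Set.mem_Iic]; omega
  set β : Fin k → ℝ := fun j => ((j + 1 : ℕ) : ℝ) * π / (n + 1)
  have hβ : ∀ j, β j ∈ Set.Ioo 0 π := fun j => natCast_mul_pi_div_mem_Ioo (Nat.succ_pos j) (by omega)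
  have hrβ : ∀ j, r ≤ cos (β j) := fun j =>
    hrk.trans ((hanti.le_iff_ge (by simp only [Set.mem_Iic]; omega) (hmem j)).mpr (by omega))
  choose ρ a b hρ hab ha hρr hle hbal using fun j => exists_damping_parameters hr (hrβ j)
  set z : Fin k → ℂ := fun j => ρ j * Complex.exp (β j * Complex.I)
  have hz : Function.Injective z := fun j j' h => by
    have harg := congrArg Complex.arg h
    simp only [z, Complex.arg_real_mul _ (hρ _), Complex.exp_mul_I,
      Complex.arg_cos_add_sin_mul_I ⟨by linarith [(hβ j).1, Real.pi_pos], (hβ j).2.le⟩,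
      Complex.arg_cos_add_sin_mul_I ⟨by linarith [(hβ j').1, Real.pi_pos], (hβ j').2.le⟩] at harg
    exact Fin.ext (by simpa using hanti.injOn (hmem j) (hmem j') (congrArg cos harg))
  have him : ∀ j, 0 < (z j).im := fun j => by
    simp only [z, Complex.im_ofReal_mul, Complex.exp_ofReal_mul_I_im]
    exact mul_pos (hρ j) (sin_pos_of_pos_of_lt_pi (hβ j).1 (hβ j).2)
  have hbb : Pairwise fun j j' => (b j : ℂ) + b j' ≠ 1 := fun j j' hne hsum => by
    have hsum' : b j + b j' = 1 := by exact_mod_cast hsum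
    have hj : r = cos (β j) := hbal j (by linarith [hab j, hab j', hle j, hle j'])
    have hj' : r = cos (β j') := hbal j' (by linarith [hab j, hab j', hle j, hle j'])
    exact hne (Fin.ext (by simpa using hanti.injOn (hmem j) (hmem j') (hj.symm.trans hj')))
  set X := of fun i j => imPowVec n (z j) i
  have hXH : Xᴴ = Xᵀ := by ext i j; simp [X, imPowVec]
  have hXTX : Xᴴ * shiftMatrix n * X = (r : ℂ) • (Xᴴ * X) := by
    rw [hXH]
    exact transpose_mul_mul_eq_smul_of_mulVec_eq (fun j => by exact_mod_cast hab j) hbb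
      fun j => shiftMatrix_mulVec_imPowVec_of_angle (ha j) (hρr j)
  simpa using
    mem_rankNumRange_of_conjTranspose_mul_mul_eq (injective_mulVec_imPowVec hkn hz him) hXTX

theorem mul_mem_rankNumRange_shiftMatrix {n k : ℕ} {w z : ℂ} (hw : ‖w‖ = 1)
    (hz : z ∈ rankNumRange k (shiftMatrix n)) : w * z ∈ rankNumRange k (shiftMatrix n) := by
  set D := diagonal fun j : Fin n => star w ^ (j : ℕ)
  have hww : star w * w = 1 := by
    rw [Complex.star_def, Complex.conj_mul', hw, Complex.ofReal_one, one_pow]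
  have hD : D ∈ unitaryGroup (Fin n) ℂ := by
    rw [mem_unitaryGroup_iff', star_eq_conjTranspose, diagonal_conjTranspose,
      diagonal_mul_diagonal, ← diagonal_one]
    congr 1
    ext j
    simp only [Pi.star_apply, star_pow, star_star, ← mul_pow, mul_comm w, hww, one_pow]
  have hDSD : star D * shiftMatrix n * D = w • shiftMatrix n := by
    rw [star_eq_conjTranspose, diagonal_conjTranspose]
    ext i j
    rw [mul_diagonal, diagonal_mul]
    simp only [Pi.star_apply, star_pow, star_star, Matrix.smul_apply, shiftMatrix, of_apply,
      smul_eq_mul]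
    split_ifs with hij
    · rw [hij, pow_succ, mul_one, mul_one, mul_right_comm, ← mul_pow, mul_comm w, hww, one_pow,
        one_mul]
    · simp
  rw [← rankNumRange_unitary_conj hD, hDSD]
  exact mul_mem_rankNumRange_smul w hz

theorem mem_rankNumRange_shiftMatrix_iff_norm {n k : ℕ} {z : ℂ} :
    z ∈ rankNumRange k (shiftMatrix n) ↔ (‖z‖ : ℂ) ∈ rankNumRange k (shiftMatrix n) := by
  have hpolar := Complex.norm_mul_exp_arg_mul_I z
  constructor
  · intro h
    have hrot : Complex.exp (↑(-z.arg) * Complex.I) * z = ‖z‖ := by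
      calc _ = Complex.exp (↑(-z.arg) * Complex.I) * (‖z‖ * Complex.exp (z.arg * Complex.I)) := by
            rw [hpolar]
        _ = ‖z‖ := by
            rw [mul_left_comm, ← Complex.exp_add, Complex.ofReal_neg, neg_mul, neg_add_cancel,
              Complex.exp_zero, mul_one]
    exact hrot ▸ mul_mem_rankNumRange_shiftMatrix (Complex.norm_exp_ofReal_mul_I _) h
  · intro h
    have h' := mul_mem_rankNumRange_shiftMatrix (Complex.norm_exp_ofReal_mul_I z.arg) h
    rwa [mul_comm, hpolar] at h'

open Real in
theorem rankNumRange_shiftMatrix_eq_closedDisc_general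
    (n k : ℕ) (hk1 : 1 ≤ k) (hk2 : k ≤ (n + 1) / 2) :
    rankNumRange k (shiftMatrix n) =
      {z : ℂ | ‖z‖ ≤ cos (k * π / (n + 1))} := by
  have hk : 2 * k ≤ n + 1 := by omega
  ext z
  rw [Set.mem_ofPred_eq, mem_rankNumRange_shiftMatrix_iff_norm]
  refine ⟨fun h => by simpa using re_le_of_mem_rankNumRange_shiftMatrix hk1 h, fun h => ?_⟩
  rcases (norm_nonneg z).eq_or_lt with h0 | hpos
  · simpa [← h0] using zero_mem_rankNumRange_shiftMatrix hk
  · exact ofReal_mem_rankNumRange_shiftMatrix_of_pos hk hpos h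

open Real in
theorem rankNumRange_shiftMatrix_eq_closedDisc
    (n k : ℕ) (hn : 2 ≤ n) (hk1 : 1 ≤ k) (hk2 : k ≤ (n + 1) / 2) :
    rankNumRange k (shiftMatrix n) =
      {z : ℂ | ‖z‖ ≤ cos (k * π / (n + 1))} :=
  rankNumRange_shiftMatrix_eq_closedDisc_general n k hk1 hk2
end
end

section
/- Let n ≥ 2 and let S_n be the n×n shift matrix. For every integer k with ⌊(n+1)/2⌋ < k ≤ n, the rank-k numerical range Λ_k(S_n) is empty. -/
open Matrix

noncomputable section

lemma shift_ker_zero (n : ℕ) (hn : 1 ≤ n) (lam : ℂ) (x : Fin n → ℂ)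
    (hx : (shiftMatrix n - lam • 1).mulVec x = 0)
    (hlast : x ⟨n - 1, by omega⟩ = 0) : x = 0 := by
  have row : ∀ i : Fin n, 0 < (i : ℕ) →
      x ⟨(i : ℕ) - 1, by omega⟩ = lam * x i := by
    intro i hi
    have h := congrFun hx i
    set i0 : Fin n := ⟨(i : ℕ) - 1, by omega⟩ with hi0
    have hsum : ∀ t : Fin n, (shiftMatrix n - lam • 1) i t * x t
        = (if t = i0 then x t else 0) - (if i = t then lam * x t else 0) := by
      intro t
      have hc1 : ((i : ℕ) = (t : ℕ) + 1) ↔ (t = i0) := by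
        rw [Fin.ext_iff]
        simp only [hi0]
        omega
      simp only [Matrix.sub_apply, Matrix.smul_apply, Matrix.one_apply, shiftMatrix,
        Matrix.of_apply, smul_eq_mul]
      rw [if_congr hc1 rfl rfl]
      split_ifs <;> ring
    simp only [Matrix.mulVec, dotProduct, Pi.zero_apply] at h
    rw [Finset.sum_congr rfl (fun t _ => hsum t), Finset.sum_sub_distrib,
      Finset.sum_ite_eq', Finset.sum_ite_eq] at h
    simp only [Finset.mem_univ, if_true] at h
    have := sub_eq_zero.mp h
    exact this
  have key : ∀ j, j < n → x ⟨n - 1 - j, by omega⟩ = 0 := by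
    intro j
    induction j with
    | zero => intro _; simpa using hlast
    | succ j ih =>
      intro hj
      have h1 : 0 < n - 1 - j := by omega
      have hrow := row ⟨n - 1 - j, by omega⟩ h1
      have h2 : x ⟨n - 1 - j, by omega⟩ = 0 := ih (by omega)
      rw [h2, mul_zero] at hrow
      have heq : n - 1 - (j + 1) = n - 1 - j - 1 := by omega
      simp only [heq]
      exact hrow
  funext i
  have h := key (n - 1 - (i : ℕ)) (by omega)
  have heq : (⟨n - 1 - (n - 1 - (i : ℕ)), by omega⟩ : Fin n) = i := by
    ext; simp; omega
  rw [heq] at h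
  exact h

set_option maxHeartbeats 1000000 in
set_option synthInstance.maxHeartbeats 1000000 in
open Real in
theorem rankNumRange_shiftMatrix_eq_empty
    (n k : ℕ) (hn : 2 ≤ n) (hk1 : (n + 1) / 2 < k) (hk2 : k ≤ n) :
    rankNumRange k (shiftMatrix n) = ∅ := by
  ext lam
  simp only [Set.mem_empty_iff_false, iff_false, rankNumRange, Set.mem_setOf_eq]
  rintro ⟨P, hP2, hPH, hPrank, hPTP⟩
  set M := shiftMatrix n - lam • (1 : Matrix (Fin n) (Fin n) ℂ) with hM
  have hPMP : P * M * P = 0 := by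
    have h1 : P * (lam • (1 : Matrix (Fin n) (Fin n) ℂ)) * P = lam • P := by
      rw [Matrix.mul_smul, Matrix.mul_one, Matrix.smul_mul, hP2]
    rw [hM, Matrix.mul_sub, Matrix.sub_mul, hPTP, h1, sub_self]
  set p := P.mulVecLin with hp
  set f := M.mulVecLin with hf
  set V := LinearMap.range p with hV
  have hVrank : Module.finrank ℂ V = k := hPrank
  -- the restriction of f to V
  set g := f.domRestrict V with hg
  have hrange : LinearMap.range g ≤ LinearMap.ker p := by
    rintro _ ⟨⟨_, y, rfl⟩, rfl⟩
    show p (f (p y)) = 0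
    have h2 : p (f (p y)) = (P * M * P).mulVecLin y := by
      simp [hp, hf, Matrix.mulVecLin_mul, Matrix.mul_assoc]
    rw [h2, hPMP]
    simp
  set phi : LinearMap.ker g →ₗ[ℂ] ℂ :=
    { toFun := fun z => (z.1 : Fin n → ℂ) ⟨n - 1, by omega⟩,
      map_add' := fun a b => rfl,
      map_smul' := fun c a => rfl } with hphi
  have hphiinj : Function.Injective phi := by
    rw [injective_iff_map_eq_zero]
    rintro ⟨⟨z, hzV⟩, hzg⟩ hz
    have hzM : M.mulVec z = 0 := hzg
    have hz0 : z ⟨n - 1, by omega⟩ = 0 := hz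
    have hzz := shift_ker_zero n (by omega) lam z hzM hz0
    exact Subtype.ext (Subtype.ext hzz)
  have hker : Module.finrank ℂ (LinearMap.ker g) ≤ 1 := by
    have := LinearMap.finrank_le_finrank_of_injective hphiinj
    simpa using this
  have hrn : Module.finrank ℂ (LinearMap.range g) + Module.finrank ℂ (LinearMap.ker g) = k := by
    rw [LinearMap.finrank_range_add_finrank_ker g, hVrank]
  have hle : Module.finrank ℂ (LinearMap.range g) ≤ Module.finrank ℂ (LinearMap.ker p) :=
    Submodule.finrank_mono hrange
  have hrnp : k + Module.finrank ℂ (LinearMap.ker p) = n := by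
    have h := LinearMap.finrank_range_add_finrank_ker p
    rw [Module.finrank_fin_fun ℂ] at h
    have h2 : Module.finrank ℂ (LinearMap.range p) = k := hVrank
    omega
  omega
end
end

section
/- Let T be an m×m complex matrix, let 1 ≤ k ≤ N ≤ m, and let V : ℂ^N → ℂ^m be a linear isometry (V*V = I_N). Then Λ_k(V* T V) ⊆ Λ_k(T); that is, the rank-k numerical range of any compression of T to a subspace of dimension at least k is contained in the rank-k numerical range of T. -/
open Matrix

noncomputable section

namespace Matrix

variable {m n R : Type*} [Fintype m] [Fintype n] [DecidableEq n]
  {V : Matrix m n R} {W : Matrix n m R}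

theorem isIdempotentElem_mul_mul_of_mul_eq_one [Semiring R] (hWV : W * V = 1)
    {P : Matrix n n R} (hP : IsIdempotentElem P) : IsIdempotentElem (V * P * W) :=
  calc V * P * W * (V * P * W) = V * (P * (W * V) * P) * W := by simp only [Matrix.mul_assoc]
    _ = V * P * W := by rw [hWV, Matrix.mul_one, hP]

theorem rank_mul_mul_of_mul_eq_one [CommRing R] [StrongRankCondition R] (hWV : W * V = 1)
    (P : Matrix n n R) : (V * P * W).rank = P.rank := by
  refine le_antisymm ((rank_mul_le_left _ _).trans (rank_mul_le_right _ _)) ?_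
  calc P.rank = (W * V * P * (W * V)).rank := by rw [hWV, Matrix.one_mul, Matrix.mul_one]
    _ = (W * (V * P * W) * V).rank := by simp only [Matrix.mul_assoc]
    _ ≤ (V * P * W).rank := (rank_mul_le_left _ _).trans (rank_mul_le_right _ _)

end Matrix

theorem rankNumRange_compression_subset_general
    (m N k : ℕ)
    (T : Matrix (Fin m) (Fin m) ℂ)
    (V : Matrix (Fin m) (Fin N) ℂ) (hV : Vᴴ * V = 1) :
    rankNumRange k (Vᴴ * T * V) ⊆ rankNumRange k T := by
  rintro lam ⟨P, hPP, hPH, hPr, hPT⟩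
  refine ⟨V * P * Vᴴ, isIdempotentElem_mul_mul_of_mul_eq_one hV hPP,
    by simp only [conjTranspose_mul, conjTranspose_conjTranspose, hPH, Matrix.mul_assoc],
    (rank_mul_mul_of_mul_eq_one hV P).trans hPr, ?_⟩
  calc V * P * Vᴴ * T * (V * P * Vᴴ) = V * (P * (Vᴴ * T * V) * P) * Vᴴ := by
        simp only [Matrix.mul_assoc]
    _ = lam • (V * P * Vᴴ) := by rw [hPT, Matrix.mul_smul, Matrix.smul_mul]

theorem rankNumRange_compression_subset
    (m N k : ℕ) (hk : 1 ≤ k) (hkN : k ≤ N) (hNm : N ≤ m)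
    (T : Matrix (Fin m) (Fin m) ℂ)
    (V : Matrix (Fin m) (Fin N) ℂ) (hV : Vᴴ * V = 1) :
    rankNumRange k (Vᴴ * T * V) ⊆ rankNumRange k T :=
  rankNumRange_compression_subset_general m N k T V hV
end
end

section
/- Let T be an N×N complex matrix with ‖T‖ ≤ 1 (operator norm) and T^n = 0 for some n ≥ 2. Then the numerical radius of T satisfies ω(T) ≤ cos(π/(n+1)). -/
/-!
Put θ = π/(n+1) and s k = sin(kθ), so that s 0 = s (n+1) = 0, s k > 0 for 1 ≤ k ≤ n and
s (k+2) = 2 cos θ · s (k+1) - s k. With a k = Tᵏx, the vectors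
c j = s (j+2) · a j - s (j+1) · a (j+1) satisfy T c j = s (j+2) · a (j+1) - s (j+1) · a (j+2),
so the defects ‖c j‖² - ‖T c j‖² are nonnegative. Divided by s (j+1) s (j+2), the recurrence makes
them telescope to 2 cos θ ‖x‖² - 2 Re⟪x, Tx⟫. Applying this to zT with |z| = 1 chosen so that
z⟪x, Tx⟫ = |⟪x, Tx⟫| bounds the modulus.
-/

open Matrix

noncomputable section

/-- The numerical radius of a square complex matrix:
`ω(T) = sup {|⟨Tx, x⟩| : ‖x‖ = 1}`. -/
def numRadius {N : ℕ} (T : Matrix (Fin N) (Fin N) ℂ) : ℝ :=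
  sSup {r : ℝ | ∃ x : Fin N → ℂ,
    ∑ i, ‖x i‖ ^ 2 = 1 ∧ r = ‖star x ⬝ᵥ (T *ᵥ x)‖}

open Real RCLike
open scoped InnerProductSpace

theorem sin_nat_add_two_mul (θ : ℝ) (k : ℕ) :
    sin ((k + 2 : ℕ) * θ) = 2 * cos θ * sin ((k + 1 : ℕ) * θ) - sin (k * θ) := by
  have h₂ : ((k + 2 : ℕ) : ℝ) * θ = (k + 1 : ℕ) * θ + θ := by push_cast; ring
  have h₀ : (k : ℝ) * θ = (k + 1 : ℕ) * θ - θ := by push_cast; ring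
  rw [h₂, h₀, sin_add, sin_sub]
  ring

theorem sin_nat_mul_pi_div_pos {k n : ℕ} (hk₀ : 0 < k) (hk : k ≤ n) :
    0 < sin (k * (π / (n + 1))) := by
  apply sin_pos_of_pos_of_lt_pi (by positivity)
  rw [mul_div_assoc', div_lt_iff₀ (by positivity), mul_comm]
  gcongr
  exact_mod_cast Nat.lt_succ_of_le hk

/-- Here `p k = ‖Tᵏx‖²`, `q k = Re⟪Tᵏx, Tᵏ⁺¹x⟫`, and `hstep` is `‖T c j‖² ≤ ‖c j‖²` expanded. -/
theorem le_mul_of_telescoping_defects {c : ℝ} {m : ℕ} {s p q : ℕ → ℝ}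
    (hs : ∀ k, s (k + 2) = 2 * c * s (k + 1) - s k) (hs₀ : s 0 = 0) (hs_end : s (m + 2) = 0)
    (hs_pos : ∀ k, 1 ≤ k → k ≤ m + 1 → 0 < s k) (hp : p (m + 1) = 0) (hq : q m = 0)
    (hstep : ∀ j < m,
      s (j + 2) ^ 2 * p (j + 1) - 2 * (s (j + 2) * s (j + 1)) * q (j + 1)
          + s (j + 1) ^ 2 * p (j + 2)
        ≤ s (j + 2) ^ 2 * p j - 2 * (s (j + 2) * s (j + 1)) * q j + s (j + 1) ^ 2 * p (j + 1)) :
    q 0 ≤ c * p 0 := by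
  set R : ℕ → ℝ := fun j ↦ 2 * q j - s (j + 2) / s (j + 1) * p j - s j / s (j + 1) * p (j + 1)
  have hR_succ : ∀ j < m, 0 ≤ R (j + 1) - R j := by
    intro j hj
    have h₁ := hs_pos (j + 1) (by omega) (by omega)
    have h₂ := hs_pos (j + 2) (by omega) (by omega)
    have hR : R (j + 1) - R j = ((s (j + 2) ^ 2 * p j - 2 * (s (j + 2) * s (j + 1)) * q j
        + s (j + 1) ^ 2 * p (j + 1)) - (s (j + 2) ^ 2 * p (j + 1)
        - 2 * (s (j + 2) * s (j + 1)) * q (j + 1) + s (j + 1) ^ 2 * p (j + 2)))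
        / (s (j + 1) * s (j + 2)) := by
      simp only [R, show s j = 2 * c * s (j + 1) - s (j + 2) by linarith [hs j], hs (j + 1)]
      field_simp
      ring
    rw [hR]
    exact div_nonneg (sub_nonneg.2 (hstep j hj)) (by positivity)
  have hR_mono : R 0 ≤ R m := by
    rw [← sub_nonneg, ← Finset.sum_range_sub]
    exact Finset.sum_nonneg fun j hj ↦ hR_succ j (Finset.mem_range.1 hj)
  have hR₀ : R 0 = 2 * q 0 - 2 * c * p 0 := by
    have h₁ := hs_pos 1 le_rfl (by omega)
    simp only [R, hs 0, hs₀]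
    field_simp
    ring
  have hR_end : R m = 0 := by simp [R, hs_end, hp, hq]
  linarith

variable {𝕜 E : Type*} [RCLike 𝕜] [NormedAddCommGroup E] [InnerProductSpace 𝕜 E]

theorem norm_ofReal_smul_sub_ofReal_smul_sq (r t : ℝ) (u v : E) :
    ‖(r : 𝕜) • u - (t : 𝕜) • v‖ ^ 2
      = r ^ 2 * ‖u‖ ^ 2 - 2 * (r * t) * re ⟪u, v⟫_𝕜 + t ^ 2 * ‖v‖ ^ 2 := by
  rw [@norm_sub_sq 𝕜, norm_smul, norm_smul, inner_smul_left, inner_smul_right, conj_ofReal,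
    ← mul_assoc, ← ofReal_mul, re_ofReal_mul, norm_ofReal, norm_ofReal, mul_pow, mul_pow,
    sq_abs, sq_abs]
  ring

theorem re_inner_apply_self_le_of_pow_apply_eq_zero {T : E →ₗ[𝕜] E} (hT : ∀ v, ‖T v‖ ≤ ‖v‖)
    {n : ℕ} (hn : 0 < n) {x : E} (hx : (T ^ n) x = 0) :
    re ⟪x, T x⟫_𝕜 ≤ cos (π / (n + 1)) * ‖x‖ ^ 2 := by
  obtain ⟨m, rfl⟩ : ∃ m, n = m + 1 := ⟨n - 1, by omega⟩
  set θ := π / ((m + 1 : ℕ) + 1)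
  set a : ℕ → E := fun k ↦ (T ^ k) x
  have ha : ∀ k, a (k + 1) = T (a k) := fun k ↦ by simp only [a, pow_succ', Module.End.mul_apply]
  have key := le_mul_of_telescoping_defects (c := cos θ) (m := m) (s := fun k ↦ sin (k * θ))
    (p := fun k ↦ ‖a k‖ ^ 2) (q := fun k ↦ re ⟪a k, a (k + 1)⟫_𝕜)
    (fun k ↦ sin_nat_add_two_mul θ k) (by simp)
    (by
      have : ((m + 2 : ℕ) : ℝ) * θ = π := by simp only [θ]; push_cast; field_simp; ring
      simp only [this, sin_pi])
    (fun k hk₀ hk ↦ sin_nat_mul_pi_div_pos hk₀ hk) (by simp [a, hx]) (by simp [a, hx])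
    (fun j _ ↦ by
      have := hT ((sin ((j + 2 : ℕ) * θ) : 𝕜) • a j - (sin ((j + 1 : ℕ) * θ) : 𝕜) • a (j + 1))
      rw [map_sub, map_smul, map_smul, ← ha, ← ha] at this
      simpa [norm_ofReal_smul_sub_ofReal_smul_sq] using pow_le_pow_left₀ (norm_nonneg _) this 2)
  simpa [a, ha] using key

theorem norm_inner_apply_self_le_of_pow_eq_zero {T : E →ₗ[𝕜] E} (hT : ∀ v, ‖T v‖ ≤ ‖v‖)
    {n : ℕ} (hn : 0 < n) (hTn : T ^ n = 0) (x : E) :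
    ‖⟪x, T x⟫_𝕜‖ ≤ cos (π / (n + 1)) * ‖x‖ ^ 2 := by
  obtain ⟨z, hz, hzx⟩ := exists_norm_eq_mul_self ⟪x, T x⟫_𝕜
  have hzT : ∀ v, ‖(z • T) v‖ ≤ ‖v‖ := fun v ↦ by simpa [norm_smul, hz] using hT v
  have hzTn : ((z • T) ^ n) x = 0 := by simp [smul_pow, hTn]
  calc ‖⟪x, T x⟫_𝕜‖ = re ⟪x, (z • T) x⟫_𝕜 := by
        rw [LinearMap.smul_apply, inner_smul_right, ← hzx, ofReal_re]
    _ ≤ cos (π / (n + 1)) * ‖x‖ ^ 2 :=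
        re_inner_apply_self_le_of_pow_apply_eq_zero hzT hn hzTn

open Real in
theorem numRadius_le_of_contraction_nilpotent
    (N n : ℕ) (hn : 2 ≤ n) (T : Matrix (Fin N) (Fin N) ℂ)
    (hT : ‖Matrix.toEuclideanCLM (𝕜 := ℂ) T‖ ≤ 1) (hTn : T ^ n = 0) :
    numRadius T ≤ cos (π / (n + 1)) := by
  set A := Matrix.toEuclideanCLM (𝕜 := ℂ) T
  have hA : ∀ v, ‖A v‖ ≤ ‖v‖ := fun v ↦ A.le_of_opNorm_le hT v |>.trans_eq (one_mul _)
  have hAn : A.toLinearMap ^ n = 0 := by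
    rw [← ContinuousLinearMap.toLinearMap_pow, ← map_pow, hTn, map_zero]; rfl
  refine Real.sSup_le ?_ (cos_nonneg_of_mem_Icc ⟨?_, ?_⟩)
  · rintro _ ⟨x, hx, rfl⟩
    have hx' : ‖WithLp.toLp 2 x‖ = 1 := by simp [EuclideanSpace.norm_eq, hx]
    have := norm_inner_apply_self_le_of_pow_eq_zero hA (by omega) hAn (WithLp.toLp 2 x)
    rwa [hx', one_pow, mul_one, EuclideanSpace.inner_toLp_toLp, dotProduct_comm] at this
  · linarith [pi_pos, show 0 < π / (n + 1) by positivity]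
  · exact div_le_div_of_nonneg_left pi_pos.le two_pos (by norm_cast; omega)
end
end

section
/- Let T be an N×N complex matrix with T^n = 0 for some n ≥ 2. Then the numerical radius of T satisfies ω(T) ≤ ‖T‖ · cos(π/(n+1)). -/
open Matrix

noncomputable section

/-!
Haagerup–de la Harpe. For a contraction `T` with `T^n x = 0` put `v_k = T^k x` and let
`D = (1 - T*T)^{1/2}` be its defect operator. Since `⟪D u, D w⟫ = ⟪u, w⟫ - ⟪T u, T w⟫`, the sum
`∑_{k<n} ⟪D v_k, D v_{k+1}⟫` telescopes to `⟪x, T x⟫` and `∑_{k<n} ‖D v_k‖²` to `‖x‖²`. Hence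
`|⟪x, T x⟫| ≤ ∑ t_k t_{k+1}` with `∑ t_k² = ‖x‖²`, a quadratic form of the path graph on `n`
vertices, bounded by half its top eigenvalue `2 cos (π/(n+1))`, whose eigenvector
`(sin (k π/(n+1)))_k` is positive. Rescaling by `‖T‖` handles arbitrary `T`.
-/

open Finset Real
open scoped InnerProductSpace

lemma two_mul_le_mul_sq_add_inv_mul_sq {c : ℝ} (hc : 0 < c) (a b : ℝ) :
    2 * (a * b) ≤ c * a ^ 2 + c⁻¹ * b ^ 2 := by
  have h := mul_nonneg (inv_nonneg.mpr hc.le) (sq_nonneg (c * a - b))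
  have expand : c⁻¹ * (c * a - b) ^ 2 = c * a ^ 2 - 2 * (a * b) + c⁻¹ * b ^ 2 := by
    field_simp
    ring
  linarith

theorem sum_mul_succ_le_of_eigenvector {n : ℕ} {r : ℝ} {w : ℕ → ℝ} (hw0 : w 0 = 0)
    (hwn : w (n + 1) = 0) (hpos : ∀ k < n, 0 < w (k + 1))
    (hrec : ∀ k < n, w (k + 2) + w k = 2 * r * w (k + 1)) {t : ℕ → ℝ} (htn : t n = 0) :
    ∑ k ∈ range n, t k * t (k + 1) ≤ r * ∑ k ∈ range n, t k ^ 2 := by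
  set c : ℕ → ℝ := fun k => w (k + 2) / w (k + 1)
  set d : ℕ → ℝ := fun k => w k / w (k + 1)
  have hterm : ∀ k ∈ range n,
      2 * (t k * t (k + 1)) ≤ c k * t k ^ 2 + d (k + 1) * t (k + 1) ^ 2 := by
    intro k hk
    rw [mem_range] at hk
    rcases lt_or_eq_of_le (Nat.succ_le_of_lt hk) with hk' | rfl
    · have hdc : d (k + 1) = (c k)⁻¹ := (inv_div _ _).symm
      rw [hdc]
      exact two_mul_le_mul_sq_add_inv_mul_sq (div_pos (hpos _ hk') (hpos k hk)) _ _
    · simp [c, hwn, htn]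
  have hshift : ∑ k ∈ range n, (c k * t k ^ 2 + d (k + 1) * t (k + 1) ^ 2)
      = ∑ k ∈ range n, (c k + d k) * t k ^ 2 := by
    have hd : ∑ k ∈ range n, d (k + 1) * t (k + 1) ^ 2 = ∑ k ∈ range n, d k * t k ^ 2 := by
      have := sum_range_succ' (fun k => d k * t k ^ 2) n
      rw [sum_range_succ, htn] at this
      simpa [d, hw0] using this.symm
    simp only [sum_add_distrib, add_mul, hd]
  have hcd : ∀ k ∈ range n, (c k + d k) * t k ^ 2 = 2 * r * t k ^ 2 := by
    intro k hk
    rw [mem_range] at hk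
    rw [← add_div, hrec k hk, mul_div_cancel_right₀ _ (hpos k hk).ne']
  have := sum_le_sum hterm
  rw [hshift, sum_congr rfl hcd, ← mul_sum, ← mul_sum] at this
  linarith

theorem sum_mul_succ_le_cos_mul_sum_sq {n : ℕ} {t : ℕ → ℝ} (htn : t n = 0) :
    ∑ k ∈ range n, t k * t (k + 1) ≤ cos (π / (n + 1)) * ∑ k ∈ range n, t k ^ 2 := by
  set θ := π / (n + 1)
  have hθ : (n + 1 : ℝ) * θ = π := mul_div_cancel₀ π (by positivity)
  refine sum_mul_succ_le_of_eigenvector (w := fun k => sin (k * θ)) ?_ ?_ ?_ ?_ htn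
  · simp
  · simp [hθ]
  · intro k hk
    apply sin_pos_of_pos_of_lt_pi (by positivity)
    rw [← hθ]
    gcongr
    exact_mod_cast Nat.succ_lt_succ hk
  · intro k _
    simp only [sin_add_sin, Nat.cast_add, Nat.cast_ofNat, Nat.cast_one]
    ring_nf

lemma CStarAlgebra.star_mul_self_le_one {A : Type*} [CStarAlgebra A] [PartialOrder A]
    [StarOrderedRing A] {a : A} (ha : ‖a‖ ≤ 1) : star a * a ≤ 1 := by
  refine CStarAlgebra.star_mul_le_algebraMap_norm_sq.trans ?_
  rw [← map_one (algebraMap ℝ A)]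
  exact algebraMap_mono _ (pow_le_one₀ (norm_nonneg a) ha)

namespace ContinuousLinearMap

variable {E : Type*} [NormedAddCommGroup E] [InnerProductSpace ℂ E] [CompleteSpace E]

def defect (T : E →L[ℂ] E) : E →L[ℂ] E := CFC.sqrt (1 - star T * T)

theorem inner_defect_apply_defect_apply {T : E →L[ℂ] E} (hT : ‖T‖ ≤ 1) (u w : E) :
    ⟪T.defect u, T.defect w⟫_ℂ = ⟪u, w⟫_ℂ - ⟪T u, T w⟫_ℂ := by
  have h0 : 0 ≤ 1 - star T * T := sub_nonneg.mpr (CStarAlgebra.star_mul_self_le_one hT)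
  rw [defect, ← adjoint_inner_right, ← star_eq_adjoint,
    (IsSelfAdjoint.of_nonneg (CFC.sqrt_nonneg _)).star_eq, ← mul_apply_eq_comp,
    CFC.sqrt_mul_sqrt_self _ h0]
  simp [star_eq_adjoint, adjoint_inner_right, inner_sub_right]

theorem norm_defect_apply_sq {T : E →L[ℂ] E} (hT : ‖T‖ ≤ 1) (u : E) :
    ‖T.defect u‖ ^ 2 = ‖u‖ ^ 2 - ‖T u‖ ^ 2 := by
  simp only [norm_sq_eq_re_inner (𝕜 := ℂ), inner_defect_apply_defect_apply hT, map_sub]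

theorem norm_inner_apply_le_cos_mul_sq_of_norm_le_one {T : E →L[ℂ] E} (hT : ‖T‖ ≤ 1) {n : ℕ}
    {x : E} (hx : (T ^ n) x = 0) :
    ‖⟪x, T x⟫_ℂ‖ ≤ cos (π / (n + 1)) * ‖x‖ ^ 2 := by
  set v : ℕ → E := fun k => (T ^ k) x
  have hv : ∀ k, v (k + 1) = T (v k) := fun k => by simp only [v, pow_succ', mul_apply_eq_comp]
  have hvn : v n = 0 := hx
  set t : ℕ → ℝ := fun k => ‖T.defect (v k)‖
  have hsum : ∑ k ∈ range n, t k ^ 2 = ‖x‖ ^ 2 := by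
    simp only [t, norm_defect_apply_sq hT, ← hv]
    rw [sum_range_sub' (fun k => ‖v k‖ ^ 2), hvn]
    simp [v]
  have htele : ⟪x, T x⟫_ℂ = ∑ k ∈ range n, ⟪T.defect (v k), T.defect (v (k + 1))⟫_ℂ := by
    simp only [inner_defect_apply_defect_apply hT, ← hv]
    rw [sum_range_sub' (fun k => ⟪v k, v (k + 1)⟫_ℂ), hvn]
    simp [v]
  calc ‖⟪x, T x⟫_ℂ‖ ≤ ∑ k ∈ range n, t k * t (k + 1) := by
        rw [htele]
        exact (norm_sum_le _ _).trans (sum_le_sum fun k _ => norm_inner_le_norm _ _)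
    _ ≤ cos (π / (n + 1)) * ∑ k ∈ range n, t k ^ 2 :=
        sum_mul_succ_le_cos_mul_sum_sq (by simp [t, hvn])
    _ = cos (π / (n + 1)) * ‖x‖ ^ 2 := by rw [hsum]

theorem norm_inner_apply_le_mul_cos_mul_sq_of_pow_apply_eq_zero (T : E →L[ℂ] E) {n : ℕ} {x : E}
    (hx : (T ^ n) x = 0) :
    ‖⟪x, T x⟫_ℂ‖ ≤ ‖T‖ * cos (π / (n + 1)) * ‖x‖ ^ 2 := by
  rcases (norm_nonneg T).eq_or_lt with hT | hT
  · simp [norm_eq_zero.mp hT.symm]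
  set S : E →L[ℂ] E := ((‖T‖ : ℂ)⁻¹) • T
  have hscalar : ‖((‖T‖ : ℂ)⁻¹)‖ = ‖T‖⁻¹ := by simp
  have hS : ‖S‖ ≤ 1 := by rw [norm_smul, hscalar, inv_mul_cancel₀ hT.ne']
  have hSx : (S ^ n) x = 0 := by simp [S, smul_pow, hx]
  have hbound := norm_inner_apply_le_cos_mul_sq_of_norm_le_one hS hSx
  rw [_root_.smul_apply, inner_smul_right, norm_mul, hscalar] at hbound
  calc ‖⟪x, T x⟫_ℂ‖ = ‖T‖ * (‖T‖⁻¹ * ‖⟪x, T x⟫_ℂ‖) := by field_simp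
    _ ≤ ‖T‖ * (cos (π / (n + 1)) * ‖x‖ ^ 2) := by gcongr
    _ = ‖T‖ * cos (π / (n + 1)) * ‖x‖ ^ 2 := by ring

end ContinuousLinearMap

theorem numRadius_le_of_forall_norm_inner_le {N : ℕ} (T : Matrix (Fin N) (Fin N) ℂ) {c : ℝ}
    (hc : 0 ≤ c)
    (h : ∀ x : EuclideanSpace ℂ (Fin N), ‖x‖ = 1 → ‖⟪x, toEuclideanCLM (𝕜 := ℂ) T x⟫_ℂ‖ ≤ c) :
    numRadius T ≤ c := by
  refine Real.sSup_le ?_ hc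
  rintro r ⟨x, hx, rfl⟩
  have hnorm : ‖WithLp.toLp 2 x‖ = 1 := by
    rw [← pow_eq_one_iff_of_nonneg (norm_nonneg _) two_ne_zero, EuclideanSpace.norm_sq_eq]
    exact hx
  simpa [toEuclideanCLM_toLp, EuclideanSpace.inner_toLp_toLp, dotProduct_comm] using h _ hnorm

theorem numRadius_le_opNorm_mul_cos_of_nilpotent
    (N n : ℕ) (hn : 2 ≤ n) (T : Matrix (Fin N) (Fin N) ℂ) (hTn : T ^ n = 0) :
    numRadius T ≤ ‖Matrix.toEuclideanCLM (𝕜 := ℂ) T‖ * cos (π / (n + 1)) := by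
  have hcos : 0 ≤ cos (π / (n + 1)) := by
    have : (2 : ℝ) ≤ n := by exact_mod_cast hn
    apply cos_nonneg_of_mem_Icc
    constructor
    · linarith [pi_pos, div_pos pi_pos (by positivity : (0 : ℝ) < n + 1)]
    · rw [div_le_div_iff_of_pos_left pi_pos (by positivity) two_pos]
      linarith
  refine numRadius_le_of_forall_norm_inner_le T (by positivity) fun x hx => ?_
  have hTx : (toEuclideanCLM (𝕜 := ℂ) T ^ n) x = 0 := by
    rw [← map_pow, hTn, map_zero, _root_.zero_apply]
  simpa [hx] using ContinuousLinearMap.norm_inner_apply_le_mul_cos_mul_sq_of_pow_apply_eq_zero _ hTx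
end
end
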